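/- Let $U \subseteq \mathbb{R}^N$ be open, $(\eta^{ij})$ a symmetric real matrix, $\varepsilon_\alpha \in \mathbb{R}$, and $F^i, \psi^\alpha : U \to \mathbb{R}$ be $C^3$ functions. Define $b^{jk}_r = \eta^{js} \frac{\partial^2 F^k}{\partial u^s \partial u^r} - \eta^{js} \eta^{kp} \sum_{\alpha=1}^L \varepsilon_\alpha \frac{\partial^2 \psi^\alpha}{\partial u^s \partial u^r} \frac{\partial \psi^\alpha}{\partial u^p}$ and $(w^\alpha)^j_s = \eta^{jp} \frac{\partial^2 \psi^\alpha}{\partial u^p \partial u^s}$. Then for all $j,k,r,s$: $\frac{\partial b^{jk}_r}{\partial u^s} - \frac{\partial b^{jk}_s}{\partial u^r} = \sum_{\alpha=1}^L \varepsilon_\alpha \left( (w^\alpha)^j_s (w^\alpha)^k_r - (w^\alpha)^j_r (w^\alpha)^k_s \right)$. -/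

import Mathlib

/-!
Expanding with the Leibniz rule, `∂_s b_r - ∂_r b_s` consists of third derivatives of `F^k`, third
derivatives of `ψ^α` multiplied by `∂_p ψ^α`, and products of second derivatives of `ψ^α`.
By Schwarz's theorem the first two kinds are symmetric in `r, s` and cancel, while the products
`ψ^α_{rt} ψ^α_{ps} - ψ^α_{st} ψ^α_{pr}`, weighted by `η^{jt} η^{kp} ε_α`, regroup into the
quadratic expression in `w^α` on the right.
-/

/-- Partial derivative of `f` in the `k`-th coordinate direction at `x`. -/
noncomputable def pd {N : ℕ} (f : (Fin N → ℝ) → ℝ) (k : Fin N) (x : Fin N → ℝ) : ℝ :=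
  fderiv ℝ f x (Pi.single k 1)

section PartialDerivative

variable {N : ℕ} {U : Set (Fin N → ℝ)} {x : Fin N → ℝ} {f g : (Fin N → ℝ) → ℝ}

lemma pd_congr_of_eventuallyEq (h : f =ᶠ[nhds x] g) (k : Fin N) : pd f k x = pd g k x := by
  rw [pd, pd, h.fderiv_eq]

lemma pd_sub (hf : DifferentiableAt ℝ f x) (hg : DifferentiableAt ℝ g x) (k : Fin N) :
    pd (fun y => f y - g y) k x = pd f k x - pd g k x := by
  rw [pd, fderiv_fun_sub hf hg]; rfl

lemma pd_sum {ι : Type*} (t : Finset ι) {f : ι → (Fin N → ℝ) → ℝ}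
    (h : ∀ i ∈ t, DifferentiableAt ℝ (f i) x) (k : Fin N) :
    pd (fun y => ∑ i ∈ t, f i y) k x = ∑ i ∈ t, pd (f i) k x := by
  rw [pd, fderiv_fun_sum h]; simp [pd]

lemma pd_const_mul (c : ℝ) (hf : DifferentiableAt ℝ f x) (k : Fin N) :
    pd (fun y => c * f y) k x = c * pd f k x := by
  rw [pd, fderiv_const_mul hf]; rfl

lemma pd_mul (hf : DifferentiableAt ℝ f x) (hg : DifferentiableAt ℝ g x) (k : Fin N) :
    pd (fun y => f y * g y) k x = pd f k x * g x + f x * pd g k x := by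
  rw [pd, fderiv_fun_mul hf hg]; simp [pd]; ring

lemma ContDiffOn.contDiffOn_pd {n : WithTop ℕ∞} (hf : ContDiffOn ℝ (n + 1) f U) (hU : IsOpen U)
    (k : Fin N) : ContDiffOn ℝ n (pd f k) U :=
  (hf.fderiv_of_isOpen hU le_rfl).clm_apply contDiffOn_const

lemma ContDiffOn.differentiableAt_pd (hf : ContDiffOn ℝ 2 f U) (hU : IsOpen U) (hx : x ∈ U)
    (k : Fin N) : DifferentiableAt ℝ (pd f k) x :=
  ((hf.contDiffOn_pd (n := 1) hU k).differentiableOn one_ne_zero).differentiableAt (hU.mem_nhds hx)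

lemma ContDiffOn.differentiableAt_pd_pd (hf : ContDiffOn ℝ 3 f U) (hU : IsOpen U) (hx : x ∈ U)
    (k l : Fin N) : DifferentiableAt ℝ (pd (pd f k) l) x :=
  (hf.contDiffOn_pd (n := 2) hU k).differentiableAt_pd hU hx l

lemma ContDiffOn.pd_pd_comm (hf : ContDiffOn ℝ 2 f U) (hU : IsOpen U) (hx : x ∈ U)
    (k l : Fin N) : pd (pd f k) l x = pd (pd f l) k x := by
  have hf' : ContDiffAt ℝ 2 f x := hf.contDiffAt (hU.mem_nhds hx)
  have hdf : DifferentiableAt ℝ (fderiv ℝ f) x :=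
    (hf'.fderiv_right le_rfl).differentiableAt one_ne_zero
  have hpd (k : Fin N) :
      fderiv ℝ (pd f k) x = (fderiv ℝ (fderiv ℝ f) x).flip (Pi.single k 1) :=
    (fderiv_clm_apply hdf (differentiableAt_const _)).trans (by simp)
  rw [pd, pd, hpd, hpd]
  exact hf'.isSymmSndFDerivAt (by simp [minSmoothness_of_isRCLikeNormedField]) _ _

lemma ContDiffOn.pd_pd_pd_comm (hf : ContDiffOn ℝ 3 f U) (hU : IsOpen U) (hx : x ∈ U)
    (k l m : Fin N) : pd (pd (pd f k) l) m x = pd (pd (pd f m) l) k x := by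
  have hf' (k : Fin N) : ContDiffOn ℝ 2 (pd f k) U := hf.contDiffOn_pd hU k
  calc pd (pd (pd f k) l) m x = pd (pd (pd f k) m) l x := (hf' k).pd_pd_comm hU hx l m
    _ = pd (pd (pd f m) k) l x := by
        refine pd_congr_of_eventuallyEq ?_ l
        filter_upwards [hU.mem_nhds hx] with y hy
        exact (hf.of_le (by norm_num)).pd_pd_comm hU hy k m
    _ = pd (pd (pd f m) l) k x := (hf' m).pd_pd_comm hU hx k l

end PartialDerivative

lemma Finset.sum_sum_mul_sum_eq_sum_mul_sum_mul_sum {ι κ R : Type*} [Fintype ι] [Fintype κ]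
    [CommSemiring R] (u v : ι → R) (ε : κ → R) (a b : κ → ι → R) :
    ∑ t, ∑ p, u t * v p * ∑ α, ε α * a α t * b α p
      = ∑ α, ε α * ((∑ t, u t * a α t) * (∑ p, v p * b α p)) := by
  simp_rw [Finset.sum_mul_sum, Finset.mul_sum]
  rw [Finset.sum_comm_cycle]
  exact Finset.sum_congr rfl fun α _ => Finset.sum_congr rfl fun t _ =>
    Finset.sum_congr rfl fun p _ => by ring

theorem stmt5_general (N L : ℕ) (U : Set (Fin N → ℝ)) (hU : IsOpen U)
    (η : Matrix (Fin N) (Fin N) ℝ) (ε : Fin L → ℝ)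
    (F : Fin N → (Fin N → ℝ) → ℝ) (ψ : Fin L → (Fin N → ℝ) → ℝ)
    (hF : ∀ i, ContDiffOn ℝ 3 (F i) U) (hψ : ∀ α, ContDiffOn ℝ 3 (ψ α) U) :
    ∀ j k r s, ∀ x ∈ U,
      pd (fun y => (∑ t, η j t * pd (pd (F k) r) t y)
          - ∑ t, ∑ p, η j t * η k p * ∑ α, ε α * pd (pd (ψ α) r) t y * pd (ψ α) p y) s x
      - pd (fun y => (∑ t, η j t * pd (pd (F k) s) t y)
          - ∑ t, ∑ p, η j t * η k p * ∑ α, ε α * pd (pd (ψ α) s) t y * pd (ψ α) p y) r x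
      = ∑ α, ε α *
          ((∑ p, η j p * pd (pd (ψ α) s) p x) * (∑ p, η k p * pd (pd (ψ α) r) p x)
          - (∑ p, η j p * pd (pd (ψ α) r) p x) * (∑ p, η k p * pd (pd (ψ α) s) p x)) := by
  intro j k r s x hx
  have hψ2 (α : Fin L) : ContDiffOn ℝ 2 (ψ α) U := (hψ α).of_le (by norm_num)
  have hF_diff := (hF k).differentiableAt_pd_pd hU hx
  have hψ_diff₂ := fun α => (hψ α).differentiableAt_pd_pd hU hx
  have hψ_diff₁ := fun α => (hψ2 α).differentiableAt_pd hU hx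
  have hF3 (t : Fin N) := (hF k).pd_pd_pd_comm hU hx r t s
  have hψ3 (α : Fin L) (t : Fin N) := (hψ α).pd_pd_pd_comm hU hx r t s
  have hψs (α : Fin L) (p : Fin N) := (hψ2 α).pd_pd_comm hU hx p s
  have hψr (α : Fin L) (p : Fin N) := (hψ2 α).pd_pd_comm hU hx p r
  simp (disch := fun_prop) only [pd_sub, pd_sum, pd_const_mul, pd_mul, hF3, hψ3, hψs, hψr]
  rw [sub_sub_sub_cancel_left]
  simp only [Finset.sum_add_distrib, mul_add, add_sub_add_left_eq_sub, mul_sub,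
    Finset.sum_sum_mul_sum_eq_sum_mul_sum_mul_sum, Finset.sum_sub_distrib]

theorem stmt5 (N L : ℕ) (U : Set (Fin N → ℝ)) (hU : IsOpen U)
    (η : Matrix (Fin N) (Fin N) ℝ) (hsym : η.IsSymm) (ε : Fin L → ℝ)
    (F : Fin N → (Fin N → ℝ) → ℝ) (ψ : Fin L → (Fin N → ℝ) → ℝ)
    (hF : ∀ i, ContDiffOn ℝ 3 (F i) U) (hψ : ∀ α, ContDiffOn ℝ 3 (ψ α) U) :
    ∀ j k r s, ∀ x ∈ U,
      pd (fun y => (∑ t, η j t * pd (pd (F k) r) t y)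
          - ∑ t, ∑ p, η j t * η k p * ∑ α, ε α * pd (pd (ψ α) r) t y * pd (ψ α) p y) s x
      - pd (fun y => (∑ t, η j t * pd (pd (F k) s) t y)
          - ∑ t, ∑ p, η j t * η k p * ∑ α, ε α * pd (pd (ψ α) s) t y * pd (ψ α) p y) r x
      = ∑ α, ε α *
          ((∑ p, η j p * pd (pd (ψ α) s) p x) * (∑ p, η k p * pd (pd (ψ α) r) p x)
          - (∑ p, η j p * pd (pd (ψ α) r) p x) * (∑ p, η k p * pd (pd (ψ α) s) p x)) :=
  stmt5_general N L U hU η ε F ψ hF hψ
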